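/- arXiv:2109.00689 — 2 statements merged into one kernel-verified Lean document; each statement's English description precedes it below -/
import Mathlib

section
/- Let (g,J) be a Lie algebra with complex structure and φ ∈ Λ^{0,1}⊗g^{1,0}. Then the (0,1)-part of the Lie derivative satisfies L_φ^{0,1} = -i_{∂̄φ} as operators on Λ•g*_ℂ, where L_φ^{0,1} = i_φ ∂̄ - ∂̄ i_φ. -/
/-- Chevalley-Eilenberg differential on `k`-cochains (with trivial coefficients). -/
noncomputable def ceD {R L : Type*} [Ring R] [LieRing L] {k : ℕ}
    (f : (Fin k → L) → R) : (Fin (k + 1) → L) → R := fun x =>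
  ∑ j : Fin (k + 1), ∑ i : Fin (k + 1),
    if (i : ℕ) < (j : ℕ) then
      (-1 : R) ^ ((i : ℕ) + (j : ℕ)) *
        f (fun m =>
          if (m : ℕ) = 0 then ⁅x i, x j⁆
          else
            x ⟨min (if (m : ℕ) - 1 < (i : ℕ) then (m : ℕ) - 1
                    else if (m : ℕ) < (j : ℕ) then (m : ℕ) else (m : ℕ) + 1) k,
               Nat.lt_succ_of_le (Nat.min_le_right _ _)⟩)
    else 0

/-- Contraction `i_K` of a cochain with a vector-valued 1-form `K ∈ g*⊗g` (as an
endomorphism): `(i_K f)(x₁,…,x_k) = ∑_j f(x₁,…,K x_j,…,x_k)`. -/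
noncomputable def iIns {R L : Type*} [Ring R] [LieRing L] {k : ℕ}
    (K : L → L) (f : (Fin k → L) → R) : (Fin k → L) → R := fun x =>
  ∑ j : Fin k, f (Function.update x j (K (x j)))

/-- Contraction `i_Φ` of a cochain with a vector-valued 2-form `Φ`:
`(i_Φ f)(x₀,…,x_k) = ∑_{i<j} (-1)^{i+j+1} f(Φ(x_i,x_j), x₀,…,x̂_i,…,x̂_j,…,x_k)`. -/
noncomputable def iIns2 {R L : Type*} [Ring R] [LieRing L] {k : ℕ}
    (Φ : L → L → L) (f : (Fin k → L) → R) : (Fin (k + 1) → L) → R := fun x =>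
  ∑ j : Fin (k + 1), ∑ i : Fin (k + 1),
    if (i : ℕ) < (j : ℕ) then
      (-1 : R) ^ ((i : ℕ) + (j : ℕ) + 1) *
        f (fun m =>
          if (m : ℕ) = 0 then Φ (x i) (x j)
          else
            x ⟨min (if (m : ℕ) - 1 < (i : ℕ) then (m : ℕ) - 1
                    else if (m : ℕ) < (j : ℕ) then (m : ℕ) else (m : ℕ) + 1) k,
               Nat.lt_succ_of_le (Nat.min_le_right _ _)⟩)
    else 0

/-- The projection of a `k`-cochain onto its component of bidegree `(p, k-p)` with respect
to the decomposition `g_ℂ = g^{1,0} ⊕ g^{0,1}` given by the projections `prP, prQ`. -/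
noncomputable def bigradeP {R L : Type*} [Ring R] [LieRing L] {k : ℕ}
    (prP prQ : L → L) (p : ℕ) (f : (Fin k → L) → R) : (Fin k → L) → R := fun x =>
  ∑ S ∈ Finset.powersetCard p (Finset.univ : Finset (Fin k)),
    f (fun i => if i ∈ S then prP (x i) else prQ (x i))

/-- The operator `∂` (the `(1,0)`-part of the Chevalley-Eilenberg differential). -/
noncomputable def delOp {R L : Type*} [Ring R] [LieRing L] {k : ℕ}
    (prP prQ : L → L) (f : (Fin k → L) → R) : (Fin (k + 1) → L) → R := fun x =>
  ∑ p ∈ Finset.range (k + 1),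
    bigradeP prP prQ (p + 1) (ceD (bigradeP prP prQ p f)) x

/-- The operator `∂̄` (the `(0,1)`-part of the Chevalley-Eilenberg differential). -/
noncomputable def dbarOp {R L : Type*} [Ring R] [LieRing L] {k : ℕ}
    (prP prQ : L → L) (f : (Fin k → L) → R) : (Fin (k + 1) → L) → R := fun x =>
  ∑ p ∈ Finset.range (k + 1),
    bigradeP prP prQ p (ceD (bigradeP prP prQ p f)) x


/-!
Write `⁅u, v⁆⁰¹ = P⁅P u, Q v⁆ + P⁅Q u, P v⁆ + Q⁅Q u, Q v⁆` for the part of the bracket seen by `∂̄`.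
Splitting every argument of a multilinear cochain along `g_ℂ = g^{1,0} ⊕ g^{0,1}`, the only
terms of `π_p d π_p` that survive are those where the bracket slot receives the component of the
right type, so `∂̄` is the Chevalley–Eilenberg formula with `⁅·,·⁆` replaced by `⁅·,·⁆⁰¹`.
For any `W : L → L → L`, the contraction `i_φ` commutes with the Chevalley–Eilenberg formula for `W`
up to the formula for `W (φ u) v + W u (φ v) - φ (W u v)`. For `W = ⁅·,·⁆⁰¹` this is `∂̄φ`
(because `φ ∘ P = 0` and `Q ∘ φ = 0`), while `i_{∂̄φ}` is minus the formula for `∂̄φ`.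
-/

open Finset Function

section SkipPair

/-- The reindexing hard-wired into `ceD` and `iIns2`: slot `m ≠ 0` of the `k`-tuple receives
entry `skipPair i j m` of the `(k+1)`-tuple, i.e. the entries `i < j` are skipped (slot `0` holds
the bracket). -/
def skipPair {k : ℕ} (i j : Fin (k + 1)) (m : Fin k) : Fin (k + 1) :=
  ⟨min (if (m : ℕ) - 1 < (i : ℕ) then (m : ℕ) - 1
        else if (m : ℕ) < (j : ℕ) then (m : ℕ) else (m : ℕ) + 1) k,
   Nat.lt_succ_of_le (Nat.min_le_right _ _)⟩

variable {k : ℕ} {i j : Fin (k + 1)}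

lemma skipPair_ne_left (hij : (i : ℕ) < j) {m : Fin k} (hm : (m : ℕ) ≠ 0) :
    skipPair i j m ≠ i := by
  have := m.isLt
  simp only [Ne, Fin.ext_iff, skipPair]
  split_ifs <;> omega

lemma skipPair_ne_right (hij : (i : ℕ) < j) (m : Fin k) :
    skipPair i j m ≠ j := by
  have := m.isLt
  simp only [Ne, Fin.ext_iff, skipPair]
  split_ifs <;> omega

lemma skipPair_bijOn (hij : (i : ℕ) < j) :
    Set.BijOn (skipPair i j) {m : Fin k | (m : ℕ) ≠ 0} {l | l ≠ i ∧ l ≠ j} := by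
  refine ⟨fun m hm => ⟨skipPair_ne_left hij hm, skipPair_ne_right hij m⟩, ?_, ?_⟩
  · intro m hm m' hm' h
    have := m.isLt; have := m'.isLt
    simp only [Set.mem_ofPred_eq] at hm hm'
    simp only [Fin.ext_iff, skipPair] at h ⊢
    split_ifs at h <;> omega
  · rintro l ⟨hli, hlj⟩
    have := l.isLt; have := j.isLt
    have hli : (l : ℕ) ≠ i := Fin.val_ne_of_ne hli
    have hlj : (l : ℕ) ≠ j := Fin.val_ne_of_ne hlj
    refine ⟨⟨if (l : ℕ) < i then l + 1 else if (l : ℕ) < j then l else l - 1,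
      by split_ifs <;> omega⟩, by simp only [Set.mem_ofPred_eq]; split_ifs <;> omega, ?_⟩
    simp only [Fin.ext_iff, skipPair]
    split_ifs <;> omega

lemma sum_erase_zero_skipPair {M : Type*} [AddCommMonoid M] (hij : (i : ℕ) < j) (hk : 0 < k)
    (h : Fin (k + 1) → M) :
    ∑ m ∈ univ.erase ⟨0, hk⟩, h (skipPair i j m) = ∑ l ∈ (univ.erase i).erase j, h l := by
  have hs : ((univ.erase ⟨0, hk⟩ : Finset (Fin k)) : Set (Fin k)) =
      {m : Fin k | (m : ℕ) ≠ 0} := by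
    ext m; simp [Fin.ext_iff]
  have ht : (((univ.erase i).erase j : Finset (Fin (k + 1))) : Set (Fin (k + 1))) =
      {l | l ≠ i ∧ l ≠ j} := by
    ext l; simp
  have hbij := skipPair_bijOn (k := k) hij
  rw [← hs, ← ht] at hbij
  exact sum_nbij _ (fun m hm => hbij.mapsTo hm) hbij.injOn hbij.surjOn fun _ _ => rfl

def skipPairPreimage (i j : Fin (k + 1)) (T : Finset (Fin (k + 1))) : Finset (Fin k) :=
  univ.filter fun m => (m : ℕ) ≠ 0 ∧ skipPair i j m ∈ T

lemma card_skipPairPreimage (hij : (i : ℕ) < j) {T : Finset (Fin (k + 1))} (hiT : i ∉ T)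
    (hjT : j ∉ T) : #(skipPairPreimage i j T) = #T := by
  have hbij := skipPair_bijOn (k := k) hij
  refine card_nbij (skipPair i j) (fun m hm => (mem_filter.1 hm).2.2)
    (hbij.injOn.mono fun m hm => (mem_filter.1 hm).2.1) fun l hl => ?_
  obtain ⟨m, hm, rfl⟩ := hbij.surjOn ⟨fun h => hiT (h ▸ hl), fun h => hjT (h ▸ hl)⟩
  exact ⟨m, mem_filter.2 ⟨mem_univ m, hm, hl⟩, rfl⟩

end SkipPair

def splitTuple {ι L : Type*} [DecidableEq ι] (P Q : L → L) (T : Finset ι) (y : ι → L) : ι → L :=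
  fun l => if l ∈ T then P (y l) else Q (y l)

section Multiadditive

variable {ι L N : Type*} [DecidableEq ι] [AddCommGroup L] [AddCommGroup N]

def IsAdditiveAt (g : (ι → L) → N) (l : ι) : Prop :=
  ∀ (y : ι → L) (a b : L), g (update y l (a + b)) = g (update y l a) + g (update y l b)

def IsMultiadditive (g : (ι → L) → N) : Prop := ∀ l, IsAdditiveAt g l

lemma IsAdditiveAt.map_eq_zero {g : (ι → L) → N} {l : ι} (hg : IsAdditiveAt g l)
    {y : ι → L} (hy : y l = 0) : g y = 0 := by
  have h := hg y 0 0
  rw [add_zero, left_eq_add, ← hy, update_eq_self] at h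
  exact h

lemma IsAdditiveAt.map_sub {g : (ι → L) → N} {l : ι} (hg : IsAdditiveAt g l)
    (y : ι → L) (a b : L) : g (update y l (a - b)) = g (update y l a) - g (update y l b) := by
  rw [eq_sub_iff_add_eq, ← hg, sub_add_cancel]

lemma sum_powerset_apply_piecewise_splitTuple (P Q : L → L) (hproj : ∀ a, P a + Q a = a)
    {g : (ι → L) → N} (u : Finset ι) (hg : ∀ l ∈ u, IsAdditiveAt g l) (y : ι → L) :
    ∑ T ∈ u.powerset, g (u.piecewise (splitTuple P Q T y) y) = g y := by
  induction u using Finset.induction_on generalizing y with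
  | empty => simp
  | @insert a s ha ih =>
    have hupd : ∀ (T : Finset ι) (b : L), s.piecewise (splitTuple P Q T (update y a b))
        (update y a b) = update (s.piecewise (splitTuple P Q T y) y) a b := by
      intro T b; funext l
      by_cases hl : l = a
      · subst hl; simp [ha]
      · by_cases hls : l ∈ s <;> simp [hl, hls, splitTuple]
    have hQ : ∀ T ∈ s.powerset, g ((insert a s).piecewise (splitTuple P Q T y) y) =
        g (s.piecewise (splitTuple P Q T (update y a (Q (y a)))) (update y a (Q (y a)))) := by
      intro T hT
      have haT : a ∉ T := fun h => ha (mem_powerset.1 hT h)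
      simp [hupd, piecewise_insert, splitTuple, haT]
    have hP : ∀ T ∈ s.powerset, g ((insert a s).piecewise (splitTuple P Q (insert a T) y) y) =
        g (s.piecewise (splitTuple P Q T (update y a (P (y a)))) (update y a (P (y a)))) := by
      intro T _
      rw [hupd, piecewise_insert,
        piecewise_congr s (f' := splitTuple P Q T y) (g' := y) (fun l hl => ?_) fun _ _ => rfl]
      · simp [splitTuple]
      · simp [splitTuple, ne_of_mem_of_not_mem hl ha]
    rw [sum_powerset_insert ha, sum_congr rfl hQ, sum_congr rfl hP,
      ih (fun l hl => hg l (mem_insert_of_mem hl)), ih (fun l hl => hg l (mem_insert_of_mem hl)),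
      ← hg a (mem_insert_self a s), add_comm (Q _), hproj, update_eq_self]

variable {P Q : L → L} (hPQ : ∀ a, P (Q a) = 0) (hQP : ∀ a, Q (P a) = 0)
include hPQ hQP

lemma apply_splitTuple_of_splitTuple_eq {g : (ι → L) → N} (hg : IsMultiadditive g) {m₀ : ι}
    {R : Finset ι} (hR : m₀ ∉ R) {y : ι → L} (hy : ∀ m ≠ m₀, splitTuple P Q R y m = y m)
    (S : Finset ι) :
    g (splitTuple P Q S y) =
      (if S = R then g (update y m₀ (Q (y m₀))) else 0) +
        (if S = insert m₀ R then g (update y m₀ (P (y m₀))) else 0) := by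
  by_cases hSR : S = R
  · subst hSR
    rw [if_pos rfl, if_neg (ne_insert_of_notMem _ _ hR), add_zero]
    congr 1; funext m
    by_cases hm : m = m₀
    · subst hm; simp [splitTuple, hR]
    · rw [update_of_ne hm, hy m hm]
  by_cases hSR' : S = insert m₀ R
  · subst hSR'
    rw [if_neg (ne_insert_of_notMem _ _ hR).symm, if_pos rfl, zero_add]
    congr 1; funext m
    by_cases hm : m = m₀
    · subst hm; simp [splitTuple]
    · rw [update_of_ne hm, ← hy m hm]; simp [splitTuple, hm]
  rw [if_neg hSR, if_neg hSR', add_zero]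
  obtain ⟨m, hm, hmS⟩ : ∃ m ≠ m₀, ¬(m ∈ S ↔ m ∈ R) := by
    by_contra! hall
    have hSE : S.erase m₀ = R := by
      ext m
      by_cases hm : m = m₀
      · subst hm; simp [hR]
      · simp [hm, hall m hm]
    by_cases h₀ : m₀ ∈ S
    · exact hSR' (by rw [← hSE, insert_erase h₀])
    · exact hSR (by rw [← hSE, erase_eq_of_notMem h₀])
  refine (hg m).map_eq_zero ?_
  have hym := hy m hm
  unfold splitTuple at hym ⊢
  by_cases hmR : m ∈ R
  · rw [if_neg (by tauto), ← hym, if_pos hmR, hQP]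
  · rw [if_pos (by tauto), ← hym, if_neg hmR, hPQ]

lemma sum_powersetCard_apply_splitTuple_of_splitTuple_eq [Fintype ι] {g : (ι → L) → N}
    (hg : IsMultiadditive g) {m₀ : ι} {R : Finset ι} (hR : m₀ ∉ R) {y : ι → L}
    (hy : ∀ m ≠ m₀, splitTuple P Q R y m = y m) (p : ℕ) :
    ∑ S ∈ powersetCard p univ, g (splitTuple P Q S y) =
      (if #R = p then g (update y m₀ (Q (y m₀))) else 0) +
        (if #R + 1 = p then g (update y m₀ (P (y m₀))) else 0) := by
  simp only [apply_splitTuple_of_splitTuple_eq hPQ hQP hg hR hy, sum_add_distrib, sum_ite_eq',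
    mem_powersetCard_univ, card_insert_of_notMem hR]

end Multiadditive

section ConsSkipPair

variable {L : Type*} {k : ℕ}

def consSkipPair (c : L) (i j : Fin (k + 1)) (y : Fin (k + 1) → L) : Fin k → L :=
  fun m => if (m : ℕ) = 0 then c else y (skipPair i j m)

variable {i j : Fin (k + 1)}

lemma consSkipPair_congr (hij : (i : ℕ) < j) (c : L) {y y' : Fin (k + 1) → L}
    (h : ∀ l, l ≠ i → l ≠ j → y l = y' l) : consSkipPair c i j y = consSkipPair c i j y' := by
  funext m
  by_cases hm : (m : ℕ) = 0
  · simp [consSkipPair, hm]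
  · simp only [consSkipPair, if_neg hm]
    exact h _ (skipPair_ne_left hij hm) (skipPair_ne_right hij m)

lemma consSkipPair_update_left (hij : (i : ℕ) < j) (c : L) (y : Fin (k + 1) → L) (a : L) :
    consSkipPair c i j (update y i a) = consSkipPair c i j y :=
  consSkipPair_congr hij c fun _ hli _ => update_of_ne hli _ _

lemma consSkipPair_update_right (hij : (i : ℕ) < j) (c : L) (y : Fin (k + 1) → L) (a : L) :
    consSkipPair c i j (update y j a) = consSkipPair c i j y :=
  consSkipPair_congr hij c fun _ _ hlj => update_of_ne hlj _ _

lemma consSkipPair_splitTuple_insert_left (hij : (i : ℕ) < j) {P Q : L → L} (c : L)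
    (T : Finset (Fin (k + 1))) (x : Fin (k + 1) → L) :
    consSkipPair c i j (splitTuple P Q (insert i T) x) = consSkipPair c i j (splitTuple P Q T x) :=
  consSkipPair_congr hij c fun l hli _ => by simp [splitTuple, hli]

lemma consSkipPair_splitTuple_insert_right (hij : (i : ℕ) < j) {P Q : L → L} (c : L)
    (T : Finset (Fin (k + 1))) (x : Fin (k + 1) → L) :
    consSkipPair c i j (splitTuple P Q (insert j T) x) = consSkipPair c i j (splitTuple P Q T x) :=
  consSkipPair_congr hij c fun l _ hlj => by simp [splitTuple, hlj]

lemma update_consSkipPair_zero (hk : 0 < k) (c c' : L) (y : Fin (k + 1) → L) :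
    update (consSkipPair c i j y) ⟨0, hk⟩ c' = consSkipPair c' i j y := by
  funext m
  by_cases hm : (m : ℕ) = 0
  · obtain rfl : m = ⟨0, hk⟩ := Fin.ext hm
    simp [consSkipPair]
  · rw [update_of_ne (fun h => hm (congrArg Fin.val h))]
    simp [consSkipPair, hm]

lemma consSkipPair_update_skipPair (hij : (i : ℕ) < j) (c : L)
    (y : Fin (k + 1) → L) {m : Fin k} (hm : (m : ℕ) ≠ 0) (a : L) :
    consSkipPair c i j (update y (skipPair i j m) a) = update (consSkipPair c i j y) m a := by
  funext m'
  by_cases hm' : (m' : ℕ) = 0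
  · have : m' ≠ m := fun h => hm (h ▸ hm')
    simp [consSkipPair, hm', this]
  · by_cases h : m' = m
    · subst h; simp [consSkipPair, hm']
    · have hσ : skipPair i j m' ≠ skipPair i j m := fun hσ =>
        h ((skipPair_bijOn hij).injOn hm' hm hσ)
      simp [consSkipPair, hm', h, hσ]

lemma IsMultiadditive.isAdditiveAt_consSkipPair {N : Type*} [AddCommGroup L] [AddCommGroup N]
    {f : (Fin k → L) → N} (hf : IsMultiadditive f) (hij : (i : ℕ) < j) (c : L)
    {l : Fin (k + 1)} (hli : l ≠ i) (hlj : l ≠ j) :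
    IsAdditiveAt (fun y => f (consSkipPair c i j y)) l := by
  obtain ⟨m, hm, rfl⟩ := (skipPair_bijOn hij).surjOn ⟨hli, hlj⟩
  intro y a b
  simp only [consSkipPair_update_skipPair hij c _ hm]
  exact hf m _ a b

lemma IsMultiadditive.add_consSkipPair {N : Type*} [AddCommGroup L] [AddCommGroup N]
    {f : (Fin k → L) → N} (hf : IsMultiadditive f) (hk : 0 < k) (a b : L) (y : Fin (k + 1) → L) :
    f (consSkipPair a i j y) + f (consSkipPair b i j y) = f (consSkipPair (a + b) i j y) := by
  rw [← update_consSkipPair_zero hk 0 a y, ← update_consSkipPair_zero hk 0 b y,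
    ← update_consSkipPair_zero hk 0 (a + b) y, hf]

lemma IsMultiadditive.sub_consSkipPair {N : Type*} [AddCommGroup L] [AddCommGroup N]
    {f : (Fin k → L) → N} (hf : IsMultiadditive f) (hk : 0 < k) (a b : L) (y : Fin (k + 1) → L) :
    f (consSkipPair a i j y) - f (consSkipPair b i j y) = f (consSkipPair (a - b) i j y) := by
  rw [← update_consSkipPair_zero hk 0 a y, ← update_consSkipPair_zero hk 0 b y,
    ← update_consSkipPair_zero hk 0 (a - b) y, (hf _).map_sub]

end ConsSkipPair

noncomputable def ceDBy {R L : Type*} [Ring R] {k : ℕ} (W : L → L → L)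
    (f : (Fin k → L) → R) : (Fin (k + 1) → L) → R := fun x =>
  ∑ j : Fin (k + 1), ∑ i : Fin (k + 1),
    if (i : ℕ) < (j : ℕ) then
      (-1 : R) ^ ((i : ℕ) + (j : ℕ)) * f (consSkipPair (W (x i) (x j)) i j x)
    else 0

lemma ceD_eq_ceDBy {R L : Type*} [Ring R] [LieRing L] {k : ℕ} (f : (Fin k → L) → R) :
    ceD f = ceDBy (fun a b => ⁅a, b⁆) f :=
  rfl

lemma iIns2_eq_neg_ceDBy {R L : Type*} [Ring R] [LieRing L] {k : ℕ} (Φ : L → L → L)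
    (f : (Fin k → L) → R) : iIns2 Φ f = -ceDBy Φ f := by
  funext x
  simp only [iIns2, ceDBy, Pi.neg_apply, ← sum_neg_distrib, pow_succ]
  refine sum_congr rfl fun j _ => sum_congr rfl fun i _ => ?_
  split_ifs
  · rw [mul_neg_one, neg_mul]
    rfl
  · simp

section Contraction

variable {R L : Type*} [Ring R] [LieRing L] {k : ℕ}

lemma IsMultiadditive.iIns {F : Type*} [FunLike F L L] [AddHomClass F L L] (φ : F)
    {f : (Fin k → L) → R} (hf : IsMultiadditive f) : IsMultiadditive (iIns (⇑φ) f) := by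
  intro m y a b
  simp only [_root_.iIns, ← sum_add_distrib]
  refine sum_congr rfl fun l _ => ?_
  by_cases hlm : l = m
  · subst hlm
    simp only [update_self, update_idem, map_add, hf l _ _ _]
  · simp only [update_of_ne hlm, update_comm (Ne.symm hlm) _ (φ (y l)) y]
    exact hf m _ a b

lemma sum_update_consSkipPair_sub (φ : L → L) (W : L → L → L) {f : (Fin k → L) → R}
    (hf : IsMultiadditive f) {i j : Fin (k + 1)} (hij : (i : ℕ) < j) (x : Fin (k + 1) → L) :
    ∑ l, f (consSkipPair (W (update x l (φ (x l)) i) (update x l (φ (x l)) j)) i j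
        (update x l (φ (x l)))) -
      iIns φ f (consSkipPair (W (x i) (x j)) i j x) =
    f (consSkipPair (W (φ (x i)) (x j) + W (x i) (φ (x j)) - φ (W (x i) (x j))) i j x) := by
  have hk : 0 < k := by have := j.isLt; omega
  have hij' : i ≠ j := Fin.ne_of_val_ne (Nat.ne_of_lt hij)
  set z := consSkipPair (W (x i) (x j)) i j x
  have hbracket : ∀ m : Fin k, (m : ℕ) ≠ 0 →
      f (consSkipPair (W (update x (skipPair i j m) (φ (x (skipPair i j m))) i)
          (update x (skipPair i j m) (φ (x (skipPair i j m))) j)) i j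
          (update x (skipPair i j m) (φ (x (skipPair i j m))))) =
        f (update z m (φ (z m))) := by
    intro m hm
    rw [update_of_ne (skipPair_ne_left hij hm).symm, update_of_ne (skipPair_ne_right hij m).symm,
      consSkipPair_update_skipPair hij _ _ hm, show z m = x (skipPair i j m) from if_neg hm]
  rw [iIns, ← add_sum_erase univ _ (mem_univ i),
    ← add_sum_erase _ _ (mem_erase.2 ⟨hij'.symm, mem_univ j⟩),
    ← add_sum_erase univ _ (mem_univ ⟨0, hk⟩), ← sum_erase_zero_skipPair hij hk,
    sum_congr rfl fun m hm => hbracket m (fun h => (mem_erase.1 hm).1 (Fin.ext h)),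
    update_consSkipPair_zero]
  simp only [update_self, update_of_ne hij', update_of_ne hij'.symm, consSkipPair_update_left hij,
    consSkipPair_update_right hij]
  rw [show z ⟨0, hk⟩ = W (x i) (x j) from if_pos rfl, ← add_assoc, add_sub_add_right_eq_sub,
    hf.add_consSkipPair hk, hf.sub_consSkipPair hk]

lemma iIns_ceDBy_sub_ceDBy_iIns (φ : L → L) (W : L → L → L) {f : (Fin k → L) → R}
    (hf : IsMultiadditive f) (x : Fin (k + 1) → L) :
    iIns φ (ceDBy W f) x - ceDBy W (iIns φ f) x =
      ceDBy (fun u v => W (φ u) v + W u (φ v) - φ (W u v)) f x := by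
  change ∑ l, ceDBy W f (update x l (φ (x l))) - _ = _
  simp only [ceDBy]
  rw [sum_comm, ← sum_sub_distrib]
  refine sum_congr rfl fun j _ => ?_
  rw [sum_comm, ← sum_sub_distrib]
  refine sum_congr rfl fun i _ => ?_
  split_ifs with hij
  · rw [← mul_sum, ← mul_sub, sum_update_consSkipPair_sub φ W hf hij]
  · simp

end Contraction

section Dbar

variable {k : ℕ} {i j : Fin (k + 1)}
variable {R L : Type*} [Ring R] [LieRing L] {P Q : L → L}

lemma bigradeP_eq_sum_splitTuple (p : ℕ) (f : (Fin k → L) → R) (x : Fin k → L) :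
    bigradeP P Q p f x = ∑ S ∈ powersetCard p univ, f (splitTuple P Q S x) :=
  rfl

lemma bigradeP_consSkipPair_splitTuple (hPP : ∀ a, P (P a) = P a) (hQQ : ∀ a, Q (Q a) = Q a)
    (hPQ : ∀ a, P (Q a) = 0) (hQP : ∀ a, Q (P a) = 0) {f : (Fin k → L) → R}
    (hf : IsMultiadditive f) (hij : (i : ℕ) < j) (c : L) (T : Finset (Fin (k + 1)))
    (x : Fin (k + 1) → L) (p : ℕ) :
    bigradeP P Q p f (consSkipPair c i j (splitTuple P Q T x)) =
      (if #(skipPairPreimage i j T) = p then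
          f (consSkipPair (Q c) i j (splitTuple P Q T x)) else 0) +
        (if #(skipPairPreimage i j T) + 1 = p then
          f (consSkipPair (P c) i j (splitTuple P Q T x)) else 0) := by
  have hk : 0 < k := by have := j.isLt; omega
  set y := consSkipPair c i j (splitTuple P Q T x)
  have hy : ∀ m ≠ ⟨0, hk⟩, splitTuple P Q (skipPairPreimage i j T) y m = y m := by
    intro m hm
    have hm : (m : ℕ) ≠ 0 := fun h => hm (Fin.ext h)
    by_cases hσ : skipPair i j m ∈ T <;>
      simp [y, splitTuple, consSkipPair, skipPairPreimage, hm, hσ, hPP, hQQ]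
  rw [bigradeP_eq_sum_splitTuple, sum_powersetCard_apply_splitTuple_of_splitTuple_eq hPQ hQP hf
      (by simp [skipPairPreimage]) hy, update_consSkipPair_zero, update_consSkipPair_zero]
  rfl

variable (P Q) in
def bracket01 (u v : L) : L := P ⁅P u, Q v⁆ + P ⁅Q u, P v⁆ + Q ⁅Q u, Q v⁆

lemma sum_powerset_bigradeP_consSkipPair (hproj : ∀ a, P a + Q a = a)
    (hPP : ∀ a, P (P a) = P a) (hQQ : ∀ a, Q (Q a) = Q a)
    (hPQ : ∀ a, P (Q a) = 0) (hQP : ∀ a, Q (P a) = 0) {f : (Fin k → L) → R}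
    (hf : IsMultiadditive f) (hij : (i : ℕ) < j) (x : Fin (k + 1) → L) :
    ∑ T ∈ univ.powerset, bigradeP P Q #T f
        (consSkipPair ⁅splitTuple P Q T x i, splitTuple P Q T x j⁆ i j (splitTuple P Q T x)) =
      f (consSkipPair (bracket01 P Q (x i) (x j)) i j x) := by
  have hk : 0 < k := by have := j.isLt; omega
  have hij' : i ≠ j := Fin.ne_of_val_ne (Nat.ne_of_lt hij)
  set u := (univ.erase i).erase j
  have hju : j ∉ u := notMem_erase j _
  have hiu : i ∉ insert j u := by simp [u, hij']
  have huniv : (univ : Finset (Fin (k + 1))) = insert i (insert j u) := by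
    ext l; by_cases l = i <;> by_cases l = j <;> simp_all [u]
  obtain ⟨G, hG⟩ : ∃ G : Finset (Fin (k + 1)) → R, ∀ T, G T = bigradeP P Q #T f
      (consSkipPair ⁅splitTuple P Q T x i, splitTuple P Q T x j⁆ i j (splitTuple P Q T x)) :=
    ⟨_, fun _ => rfl⟩
  have hfour : ∀ T ∈ u.powerset,
      G T + G (insert j T) + (G (insert i T) + G (insert i (insert j T))) =
        f (consSkipPair (bracket01 P Q (x i) (x j)) i j (splitTuple P Q T x)) := by
    intro T hT
    have hiT : i ∉ T := fun h => hiu (mem_insert_of_mem (mem_powerset.1 hT h))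
    have hjT : j ∉ T := fun h => hju (mem_powerset.1 hT h)
    simp only [hG, bigradeP_consSkipPair_splitTuple hPP hQQ hPQ hQP hf hij,
      card_skipPairPreimage hij hiT hjT, card_insert_of_notMem hiT, card_insert_of_notMem hjT,
      card_insert_of_notMem (show i ∉ insert j T by simp [hij', hiT]),
      consSkipPair_splitTuple_insert_left hij, consSkipPair_splitTuple_insert_right hij]
    have hcard : #T ≠ #T + 1 + 1 := by omega
    simp only [↓reduceIte, splitTuple, hiT, hjT, Nat.add_eq_left, one_ne_zero, add_zero,
      Nat.left_eq_add, mem_insert, hij', or_self, or_false, zero_add, hij'.symm, hcard]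
    rw [hf.add_consSkipPair hk, hf.add_consSkipPair hk, bracket01]
    congr 2
    abel
  simp only [← hG]
  rw [huniv, sum_powerset_insert hiu, sum_powerset_insert hju, sum_powerset_insert hju,
    ← sum_add_distrib, ← sum_add_distrib, ← sum_add_distrib, sum_congr rfl hfour,
    ← sum_powerset_apply_piecewise_splitTuple P Q hproj u
      (fun l hl => hf.isAdditiveAt_consSkipPair hij _ (ne_of_mem_erase (mem_of_mem_erase hl))
        (ne_of_mem_erase hl)) x]
  refine sum_congr rfl fun T _ => congrArg f (consSkipPair_congr hij _ fun l hli hlj => ?_)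
  simp [u, hli, hlj]

lemma dbarOp_eq_sum_powerset (f : (Fin k → L) → R) (x : Fin (k + 1) → L) :
    dbarOp P Q f x = ∑ T ∈ univ.powerset, ceD (bigradeP P Q #T f) (splitTuple P Q T x) := by
  have hlast : ∀ T ∈ powersetCard (k + 1) (univ : Finset (Fin (k + 1))),
      ceD (bigradeP P Q #T f) (splitTuple P Q T x) = 0 := by
    intro T hT
    have hzero : bigradeP P Q (k + 1) f = 0 := by
      funext y
      simp [bigradeP_eq_sum_splitTuple, powersetCard_eq_empty.2]
    simp [(mem_powersetCard.1 hT).2, hzero, ceD]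
  rw [sum_powerset, card_univ, Fintype.card_fin, sum_range_succ, sum_eq_zero hlast, add_zero]
  refine sum_congr rfl fun p _ => sum_congr rfl fun T hT => ?_
  rw [(mem_powersetCard.1 hT).2]
  rfl

lemma dbarOp_eq_ceDBy (hproj : ∀ a, P a + Q a = a)
    (hPP : ∀ a, P (P a) = P a) (hQQ : ∀ a, Q (Q a) = Q a)
    (hPQ : ∀ a, P (Q a) = 0) (hQP : ∀ a, Q (P a) = 0) {f : (Fin k → L) → R}
    (hf : IsMultiadditive f) : dbarOp P Q f = ceDBy (bracket01 P Q) f := by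
  funext x
  simp only [dbarOp_eq_sum_powerset, ceD_eq_ceDBy, ceDBy]
  rw [sum_comm]
  refine sum_congr rfl fun j _ => ?_
  rw [sum_comm]
  refine sum_congr rfl fun i _ => ?_
  split_ifs with hij
  · rw [← mul_sum, sum_powerset_bigradeP_consSkipPair hproj hPP hQQ hPQ hQP hf hij]
  · simp

end Dbar

lemma sub_bracket01_eq {L F : Type*} [LieRing L] [FunLike F L L] [AddMonoidHomClass F L L]
    (P Q φ : F) (hproj : ∀ a, P a + Q a = a) (hQφ : ∀ a, Q (φ a) = 0) (hφP : ∀ a, φ (P a) = 0)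
    (u v : L) :
    bracket01 P Q (φ u) v + bracket01 P Q u (φ v) - φ (bracket01 P Q u v) =
      P ⁅Q u, φ (Q v)⁆ - P ⁅Q v, φ (Q u)⁆ - φ ⁅Q u, Q v⁆ := by
  have hPφ : ∀ a, P (φ a) = φ a := fun a => by simpa [hQφ] using hproj (φ a)
  have hφQ : ∀ a, φ (Q a) = φ a := fun a => by
    conv_rhs => rw [← hproj a]
    rw [map_add, hφP, zero_add]
  simp only [bracket01, hPφ, hQφ, hφQ, hφP, map_add, zero_lie, lie_zero, map_zero, add_zero,
    zero_add]
  rw [← lie_skew (φ u), map_neg]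
  abel

/-- `prP`, `prQ` are the projections of `L = g_ℂ` onto `g^{1,0}` and `g^{0,1}`, and
`φ ∈ Λ^{0,1} ⊗ g^{1,0}` is encoded as an endomorphism with values in `g^{1,0}` that vanishes on
`g^{1,0}`. -/
theorem lie01_eq_neg_contraction_dbarPhi_general
    (L : Type*) [LieRing L] [LieAlgebra ℂ L]
    (prP prQ φ : L →ₗ[ℂ] L)
    (hproj : ∀ x, prP x + prQ x = x)
    (hPP : ∀ x, prP (prP x) = prP x) (hQQ : ∀ x, prQ (prQ x) = prQ x)
    (hPQ : ∀ x, prP (prQ x) = 0) (hQP : ∀ x, prQ (prP x) = 0)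
    (hφ : ∀ x, prQ (φ x) = 0 ∧ φ (prP x) = 0) :
    ∀ (k : ℕ) (f : (Fin k → L) → ℂ),
      (∃ g : AlternatingMap ℂ L ℂ (Fin k), ⇑g = f) →
      ∀ x : Fin (k + 1) → L,
        iIns (⇑φ) (dbarOp (⇑prP) (⇑prQ) f) x - dbarOp (⇑prP) (⇑prQ) (iIns (⇑φ) f) x =
          -(iIns2
              (fun a b =>
                prP ⁅prQ a, φ (prQ b)⁆ - prP ⁅prQ b, φ (prQ a)⁆ - φ ⁅prQ a, prQ b⁆)
              f x) := by
  rintro k _ ⟨f, rfl⟩ x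
  have hf : IsMultiadditive ⇑f := fun l y a b => f.map_update_add y l a b
  rw [dbarOp_eq_ceDBy hproj hPP hQQ hPQ hQP hf,
    dbarOp_eq_ceDBy hproj hPP hQQ hPQ hQP (hf.iIns φ), iIns_ceDBy_sub_ceDBy_iIns _ _ hf,
    iIns2_eq_neg_ceDBy, Pi.neg_apply, neg_neg]
  simp only [sub_bracket01_eq prP prQ φ hproj (fun a => (hφ a).1) (fun a => (hφ a).2)]

/-- for a Lie algebra with (integrable) complex structure, encoded by the
projections `prP, prQ` onto `g^{1,0}` and `g^{0,1}` inside `g_ℂ = L`, and for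
`φ ∈ Λ^{0,1}⊗g^{1,0}` (a linear map with values in `g^{1,0}` vanishing on `g^{1,0}`), one
has `L_φ^{0,1} = i_φ∂̄ - ∂̄i_φ = -i_{∂̄φ}` on all of `Λ^• g*_ℂ`. -/
theorem lie01_eq_neg_contraction_dbarPhi
    (L : Type*) [LieRing L] [LieAlgebra ℂ L] [FiniteDimensional ℂ L]
    (prP prQ φ : L →ₗ[ℂ] L)
    (hproj : ∀ x, prP x + prQ x = x)
    (hPP : ∀ x, prP (prP x) = prP x) (hQQ : ∀ x, prQ (prQ x) = prQ x)
    (hPQ : ∀ x, prP (prQ x) = 0) (hQP : ∀ x, prQ (prP x) = 0)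
    (hintP : ∀ x y : L, prQ ⁅prP x, prP y⁆ = 0)
    (hintQ : ∀ x y : L, prP ⁅prQ x, prQ y⁆ = 0)
    (hφ : ∀ x, prQ (φ x) = 0 ∧ φ (prP x) = 0) :
    ∀ (k : ℕ) (f : (Fin k → L) → ℂ),
      (∃ g : AlternatingMap ℂ L ℂ (Fin k), ⇑g = f) →
      ∀ x : Fin (k + 1) → L,
        iIns (⇑φ) (dbarOp (⇑prP) (⇑prQ) f) x - dbarOp (⇑prP) (⇑prQ) (iIns (⇑φ) f) x =
          -(iIns2
              (fun a b =>
                prP ⁅prQ a, φ (prQ b)⁆ - prP ⁅prQ b, φ (prQ a)⁆ - φ ⁅prQ a, prQ b⁆)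
              f x) :=
  lie01_eq_neg_contraction_dbarPhi_general L prP prQ φ hproj hPP hQQ hPQ hQP hφ
end

section
/- Let (g,J) be a Lie algebra with complex structure and let φ(t) be the formal power series solution of φ = Σ_ν η_ν t_ν + ½ ∂̄†[φ,φ] constructed recursively by φ_1 = Σ_ν η_ν t_ν and φ_k = ½ ∂̄† Σ_{j=1}^{k-1} [φ_j, φ_{k-j}] for k > 1. Then the homogeneous terms satisfy ‖φ_k‖ ≤ (C/2)‖∂̄†‖ Σ_{j=1}^{k-1} ‖φ_j‖·‖φ_{k-j}‖, where C is the bilinearity constant of the Frölicher-Nijenhuis bracket; consequently the series Σ_k φ_k converges for |t| sufficiently small. -/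
/-!
Writing `A = (C/2)‖∂̄†‖`, the norms `a_k = ‖φ_k(t)‖` satisfy `a_k ≤ A ∑_{0<j<k} a_j a_{k-j}`.
The sequence `M/k²` is a majorant for such recursions once `8AM ≤ 1`: since
`k² ≤ 2(j² + (k-j)²)` and `∑ 1/j² ≤ 2`, the convolution `∑_{0<j<k} 1/(j²(k-j)²)` is at most
`8/k²`. For `|t|` small we have `a_1 ≤ M`, so `∑ ‖φ_k(t)‖ ≤ ∑ M/k² < ∞`.
-/

open Finset

theorem sum_Ioo_reflect_sub {M : Type*} [AddCommMonoid M] (f : ℕ → M) (k : ℕ) :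
    ∑ j ∈ Ioo 0 k, f (k - j) = ∑ j ∈ Ioo 0 k, f j :=
  sum_nbij' (k - ·) (k - ·) (by simp; omega) (by simp; omega) (by simp; omega)
    (by simp; omega) (fun _ _ => rfl)

theorem inv_sq_mul_inv_sq_le {x y : ℝ} (hx : 0 < x) (hy : 0 < y) :
    (x ^ 2 * y ^ 2)⁻¹ ≤ 2 / (x + y) ^ 2 * ((x ^ 2)⁻¹ + (y ^ 2)⁻¹) := by
  rw [inv_add_inv (by positivity) (by positivity), div_mul_div_comm,
    inv_le_iff_one_le_mul₀ (by positivity), div_mul_eq_mul_div, le_div_iff₀ (by positivity)]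
  nlinarith [mul_nonneg (sq_nonneg (x - y)) (by positivity : (0:ℝ) ≤ x ^ 2 * y ^ 2)]

theorem sum_Ioo_inv_sq_mul_inv_sq_le (k : ℕ) :
    ∑ j ∈ Ioo 0 k, (((j : ℝ) ^ 2 * ((k - j : ℕ) : ℝ) ^ 2))⁻¹ ≤ 8 / (k : ℝ) ^ 2 := by
  have hterm : ∀ j ∈ Ioo 0 k, (((j : ℝ) ^ 2 * ((k - j : ℕ) : ℝ) ^ 2))⁻¹ ≤
      2 / (k : ℝ) ^ 2 * (((j : ℝ) ^ 2)⁻¹ + (((k - j : ℕ) : ℝ) ^ 2)⁻¹) := by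
    intro j hj
    rw [mem_Ioo] at hj
    have hk : (k : ℝ) = j + ((k - j : ℕ) : ℝ) := by rw [Nat.cast_sub hj.2.le]; ring
    rw [hk]
    exact inv_sq_mul_inv_sq_le (by exact_mod_cast hj.1) (by simpa using hj.2)
  calc _ ≤ ∑ j ∈ Ioo 0 k, 2 / (k : ℝ) ^ 2 * (((j : ℝ) ^ 2)⁻¹ + (((k - j : ℕ) : ℝ) ^ 2)⁻¹) :=
        sum_le_sum hterm
    _ = 2 / (k : ℝ) ^ 2 * (2 * ∑ j ∈ Ioo 0 k, ((j : ℝ) ^ 2)⁻¹) := by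
        rw [← mul_sum, sum_add_distrib, sum_Ioo_reflect_sub (fun j => (((j : ℕ) : ℝ) ^ 2)⁻¹), two_mul]
    _ ≤ 2 / (k : ℝ) ^ 2 * (2 * 2) := by
        gcongr
        simpa using sum_Ioo_inv_sq_le (α := ℝ) 0 k
    _ = 8 / (k : ℝ) ^ 2 := by ring

theorem le_div_sq_of_le_mul_sum_Ioo_mul {a : ℕ → ℝ} {A M : ℝ} (ha : ∀ k, 0 ≤ a k) (hA : 0 ≤ A)
    (hAM : 8 * A * M ≤ 1) (h₁ : a 1 ≤ M)
    (hrec : ∀ k, 2 ≤ k → a k ≤ A * ∑ j ∈ Ioo 0 k, a j * a (k - j)) :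
    ∀ k, 1 ≤ k → a k ≤ M / (k : ℝ) ^ 2 := by
  have hM : 0 ≤ M := (ha 1).trans h₁
  intro k
  induction k using Nat.strong_induction_on with
  | _ k ih =>
    intro hk
    obtain rfl | hk2 : k = 1 ∨ 2 ≤ k := by omega
    · simpa using h₁
    calc a k ≤ A * ∑ j ∈ Ioo 0 k, M / (j : ℝ) ^ 2 * (M / ((k - j : ℕ) : ℝ) ^ 2) := by
          refine (hrec k hk2).trans ?_
          gcongr with j hj
          · exact ha _
          · rw [mem_Ioo] at hj; exact ih j hj.2 hj.1
          · rw [mem_Ioo] at hj; exact ih (k - j) (by omega) (by omega)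
      _ = A * M ^ 2 * ∑ j ∈ Ioo 0 k, (((j : ℝ) ^ 2 * ((k - j : ℕ) : ℝ) ^ 2))⁻¹ := by
          simp only [mul_sum]
          exact sum_congr rfl fun j _ => by ring
      _ ≤ A * M ^ 2 * (8 / (k : ℝ) ^ 2) := by gcongr; exact sum_Ioo_inv_sq_mul_inv_sq_le k
      _ = 8 * A * M * (M / (k : ℝ) ^ 2) := by ring
      _ ≤ M / (k : ℝ) ^ 2 := mul_le_of_le_one_left (by positivity) hAM

theorem norm_inv_two_smul_apply_sum_bilin_le {E F : Type*}
    [NormedAddCommGroup E] [NormedSpace ℂ E] [NormedAddCommGroup F] [NormedSpace ℂ F]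
    {b : E →ₗ[ℂ] E →ₗ[ℂ] F} {C : ℝ} (hb : ∀ x y, ‖b x y‖ ≤ C * ‖x‖ * ‖y‖) (T : F →L[ℂ] E)
    {ι : Type*} (s : Finset ι) (x y : ι → E) :
    ‖(2 : ℂ)⁻¹ • T (∑ j ∈ s, b (x j) (y j))‖ ≤ C / 2 * ‖T‖ * ∑ j ∈ s, ‖x j‖ * ‖y j‖ := by
  rw [norm_smul, norm_inv, RCLike.norm_two]
  calc 2⁻¹ * ‖T (∑ j ∈ s, b (x j) (y j))‖ ≤ 2⁻¹ * (‖T‖ * ∑ j ∈ s, C * ‖x j‖ * ‖y j‖) := by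
        gcongr
        exact (T.le_opNorm _).trans <| by
          gcongr; exact (norm_sum_le _ _).trans (sum_le_sum fun j _ => hb _ _)
    _ = C / 2 * ‖T‖ * ∑ j ∈ s, ‖x j‖ * ‖y j‖ := by
        simp only [mul_sum]
        exact sum_congr rfl fun j _ => by ring

theorem norm_sum_smul_le_of_norm_le {E ι : Type*} [NormedAddCommGroup E] [NormedSpace ℂ E]
    [Fintype ι] {t : ι → ℂ} {ε : ℝ} (ht : ∀ ν, ‖t ν‖ ≤ ε) (η : ι → E) :
    ‖∑ ν, t ν • η ν‖ ≤ ε * ∑ ν, ‖η ν‖ :=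
  calc ‖∑ ν, t ν • η ν‖ ≤ ∑ ν, ‖t ν‖ * ‖η ν‖ := by
        simpa only [norm_smul] using norm_sum_le univ fun ν => t ν • η ν
    _ ≤ ε * ∑ ν, ‖η ν‖ := by
        rw [mul_sum]; exact sum_le_sum fun ν _ => by gcongr; exact ht ν

theorem kuranishi_series_estimate_and_convergence_general
    {V₁ V₂ : Type*}
    [NormedAddCommGroup V₁] [NormedSpace ℂ V₁] [FiniteDimensional ℂ V₁]
    [NormedAddCommGroup V₂] [NormedSpace ℂ V₂]
    (b : V₁ →ₗ[ℂ] V₁ →ₗ[ℂ] V₂) (T : V₂ →L[ℂ] V₁) (C : ℝ) (hC : 0 ≤ C)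
    (hb : ∀ x y, ‖b x y‖ ≤ C * ‖x‖ * ‖y‖)
    (r : ℕ) (η : Fin r → V₁)
    (φ : ℕ → (Fin r → ℂ) → V₁)
    (hφ0 : ∀ t, φ 0 t = 0)
    (hφ1 : ∀ t, φ 1 t = ∑ ν, t ν • η ν)
    (hφk : ∀ k, 2 ≤ k → ∀ t, φ k t =
      (2 : ℂ)⁻¹ • T (∑ j ∈ Finset.Ioo 0 k, b (φ j t) (φ (k - j) t))) :
    (∀ k, 2 ≤ k → ∀ t, ‖φ k t‖ ≤
        C / 2 * ‖T‖ * ∑ j ∈ Finset.Ioo 0 k, ‖φ j t‖ * ‖φ (k - j) t‖) ∧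
    (∃ ε > (0 : ℝ), ∀ t : Fin r → ℂ, (∀ ν, ‖t ν‖ < ε) →
        Summable fun k => φ k t) := by
  have hest : ∀ k, 2 ≤ k → ∀ t, ‖φ k t‖ ≤
      C / 2 * ‖T‖ * ∑ j ∈ Ioo 0 k, ‖φ j t‖ * ‖φ (k - j) t‖ := fun k hk t => by
    rw [hφk k hk t]; exact norm_inv_two_smul_apply_sum_bilin_le hb T _ _ _
  refine ⟨hest, ?_⟩
  set A := C / 2 * ‖T‖
  set M := (8 * (A + 1))⁻¹
  set S := ∑ ν, ‖η ν‖
  have hA : 0 ≤ A := by positivity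
  have hM : 0 < M := by positivity
  have hAM : 8 * A * M ≤ 1 := by
    rw [mul_inv_le_iff₀ (by positivity)]; linarith
  refine ⟨M / (S + 1), by positivity, fun t ht => ?_⟩
  have hφ1t : ‖φ 1 t‖ ≤ M := calc
    ‖φ 1 t‖ ≤ M / (S + 1) * S := hφ1 t ▸ norm_sum_smul_le_of_norm_le (fun ν => (ht ν).le) η
    _ ≤ M := by
      rw [div_mul_eq_mul_div, div_le_iff₀ (by positivity)]
      exact mul_le_mul_of_nonneg_left (by linarith) hM.le
  have hbound : ∀ k, ‖φ k t‖ ≤ M / (k : ℝ) ^ 2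
    | 0 => by simp [hφ0]
    | k + 1 => le_div_sq_of_le_mul_sum_Ioo_mul (a := (‖φ · t‖)) (fun _ => norm_nonneg _)
        hA hAM hφ1t (fun k hk => hest k hk t) (k + 1) (by omega)
  refine Summable.of_norm_bounded ?_ hbound
  simpa [div_eq_mul_inv] using (Real.summable_nat_pow_inv.mpr one_lt_two).mul_left M

/-- the homogeneous terms of the Kuranishi power series
`φ₁ = ∑_ν η_ν t_ν`, `φ_k = ½ ∂̄† ∑_{0<j<k} [φ_j, φ_{k-j}]` satisfy the estimate
`‖φ_k‖ ≤ (C/2)‖∂̄†‖ ∑_{0<j<k} ‖φ_j‖·‖φ_{k-j}‖`, and consequently the series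
`∑_k φ_k(t)` converges for `t` sufficiently small.  (Here `V₁, V₂` model
`Λ^{0,1}⊗g^{1,0}` and `Λ^{0,2}⊗g^{1,0}`, `b` the Frölicher-Nijenhuis bracket with
bilinearity constant `C`, and `T` the Moore-Penrose inverse `∂̄†`.) -/
theorem kuranishi_series_estimate_and_convergence
    {V₁ V₂ : Type*}
    [NormedAddCommGroup V₁] [NormedSpace ℂ V₁] [FiniteDimensional ℂ V₁]
    [NormedAddCommGroup V₂] [NormedSpace ℂ V₂] [FiniteDimensional ℂ V₂]
    (b : V₁ →ₗ[ℂ] V₁ →ₗ[ℂ] V₂) (T : V₂ →L[ℂ] V₁) (C : ℝ) (hC : 0 ≤ C)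
    (hb : ∀ x y, ‖b x y‖ ≤ C * ‖x‖ * ‖y‖)
    (r : ℕ) (η : Fin r → V₁)
    (φ : ℕ → (Fin r → ℂ) → V₁)
    (hφ0 : ∀ t, φ 0 t = 0)
    (hφ1 : ∀ t, φ 1 t = ∑ ν, t ν • η ν)
    (hφk : ∀ k, 2 ≤ k → ∀ t, φ k t =
      (2 : ℂ)⁻¹ • T (∑ j ∈ Finset.Ioo 0 k, b (φ j t) (φ (k - j) t))) :
    (∀ k, 2 ≤ k → ∀ t, ‖φ k t‖ ≤
        C / 2 * ‖T‖ * ∑ j ∈ Finset.Ioo 0 k, ‖φ j t‖ * ‖φ (k - j) t‖) ∧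
    (∃ ε > (0 : ℝ), ∀ t : Fin r → ℂ, (∀ ν, ‖t ν‖ < ε) →
        Summable fun k => φ k t) :=
  kuranishi_series_estimate_and_convergence_general b T C hC hb r η φ hφ0 hφ1 hφk
end
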